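/- arXiv:1112.5697 — 6 statements merged into one kernel-verified Lean document; each statement's English description precedes it below -/
import Mathlib

section
/- For integers r,s ≥ 2, the shuffle product identity holds: ζ^{o}(r) · ζ^{e}(s) = Σ_{i+j=r+s, i≥2, j≥1} [ C(i−1,r−1) ζ^{oe}(i,j) + C(i−1,s−1) ζ^{oo}(i,j) ], where C(n,k) denotes the binomial coefficient, ζ^{o}(k) = Σ_{n odd>0} 1/n^k, ζ^{e}(k) = Σ_{n even>0} 1/n^k, ζ^{oe}(i,j) = Σ_{m>n>0, m odd, n even} 1/(m^i n^j), and ζ^{oo}(i,j) = Σ_{m>n>0, m,n odd} 1/(m^i n^j). -/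
/-- ζ^{o}(k) = Σ_{n>0 odd} 1/n^k -/
noncomputable def zetaO (k : ℕ) : ℝ :=
  ∑' n : {n : ℕ // 0 < n ∧ Odd n}, 1 / ((n : ℕ) : ℝ) ^ k

/-- ζ^{e}(k) = Σ_{n>0 even} 1/n^k -/
noncomputable def zetaE (k : ℕ) : ℝ :=
  ∑' n : {n : ℕ // 0 < n ∧ Even n}, 1 / ((n : ℕ) : ℝ) ^ k

/-- ζ^{eo}(r,s) -/
noncomputable def dzetaEO (r s : ℕ) : ℝ :=
  ∑' p : {p : ℕ × ℕ // p.2 < p.1 ∧ 0 < p.2 ∧ Even p.1 ∧ Odd p.2},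
    1 / ((p.1.1 : ℝ) ^ r * (p.1.2 : ℝ) ^ s)

/-- ζ^{oe}(r,s) -/
noncomputable def dzetaOE (r s : ℕ) : ℝ :=
  ∑' p : {p : ℕ × ℕ // p.2 < p.1 ∧ 0 < p.2 ∧ Odd p.1 ∧ Even p.2},
    1 / ((p.1.1 : ℝ) ^ r * (p.1.2 : ℝ) ^ s)

/-- ζ^{oo}(r,s) -/
noncomputable def dzetaOO (r s : ℕ) : ℝ :=
  ∑' p : {p : ℕ × ℕ // p.2 < p.1 ∧ 0 < p.2 ∧ Odd p.1 ∧ Odd p.2},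
    1 / ((p.1.1 : ℝ) ^ r * (p.1.2 : ℝ) ^ s)

/-!
With `a = 1/x`, `b = 1/y`, `w = 1/(x+y)` one has `a b = w (a + b)`. Iterating this relation, with
Pascal's rule counting the multiplicities, gives the partial fraction decomposition
`1/(x^r y^s) = ∑ᵢ [C(i-1,r-1) / ((x+y)^i y^(r+s-i)) + C(i-1,s-1) / ((x+y)^i x^(r+s-i))]`.
Summing it over odd `x` and even `y`, the substitution `(m, n) = (x + y, y)` turns the first family
into `ζ^{oe}(i, r+s-i)` and `(m, n) = (x + y, x)` turns the second into `ζ^{oo}(i, r+s-i)`; all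
terms are positive, so the finite and infinite sums may be interchanged.
-/

open Finset

section PartialFractions

variable {R : Type*} [CommSemiring R]

/-- `∑_{i=m+1}^{m+n+1} C(i-1, m) w^i z^(m+n+2-i)`, written with `i = m + 1 + k`, `k + l = n`
to avoid truncated subtraction. -/
def shuffleSum (w z : R) (m n : ℕ) : R :=
  ∑ p ∈ antidiagonal n, ((m + p.1).choose m : R) * w ^ (m + 1 + p.1) * z ^ (p.2 + 1)

theorem shuffleSum_zero_right (w z : R) (m : ℕ) : shuffleSum w z m 0 = w ^ (m + 1) * z := by
  simp [shuffleSum]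

theorem shuffleSum_zero_succ (w z : R) (n : ℕ) :
    shuffleSum w z 0 (n + 1) = w * z ^ (n + 2) + w * shuffleSum w z 0 n := by
  simp only [shuffleSum, Nat.sum_antidiagonal_succ, mul_sum]
  simp only [zero_add, Nat.choose_zero_right, Nat.cast_one, one_mul]
  congr 1
  · ring
  · exact sum_congr rfl fun p _ => by ring

theorem shuffleSum_succ_succ (w z : R) (m n : ℕ) :
    shuffleSum w z (m + 1) (n + 1) =
      w * (shuffleSum w z m (n + 1) + shuffleSum w z (m + 1) n) := by
  have pascal : ∀ k,
      ((m + 1 + k).choose (m + 1) : R) = (m + k).choose m + (m + k).choose (m + 1) := fun k => by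
    rw [show m + 1 + k = m + k + 1 by omega, Nat.choose_succ_succ, Nat.cast_add]
  have shifted : ∑ p ∈ antidiagonal (n + 1),
      ((m + p.1).choose (m + 1) : R) * w ^ (m + 1 + 1 + p.1) * z ^ (p.2 + 1) =
      w * shuffleSum w z (m + 1) n := by
    rw [Nat.sum_antidiagonal_succ, shuffleSum, mul_sum]
    simp only [add_zero, Nat.choose_succ_self, Nat.cast_zero, zero_mul, zero_add]
    exact sum_congr rfl fun p _ => by rw [show m + (p.1 + 1) = m + 1 + p.1 by omega]; ring
  rw [mul_add, ← shifted, shuffleSum, shuffleSum, mul_sum, ← sum_add_distrib]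
  exact sum_congr rfl fun p _ => by rw [pascal]; ring

theorem pow_succ_mul_pow_succ_of_mul_eq {a b w : R} (h : a * b = w * (a + b)) (m n : ℕ) :
    a ^ (m + 1) * b ^ (n + 1) = w * (a ^ m * b ^ (n + 1) + a ^ (m + 1) * b ^ n) :=
  calc a ^ (m + 1) * b ^ (n + 1) = a * b * (a ^ m * b ^ n) := by ring
    _ = _ := by rw [h]; ring

theorem mul_pow_succ_eq_shuffleSum {a b w : R} (h : a * b = w * (a + b)) (n : ℕ) :
    a * b ^ (n + 1) = shuffleSum w b 0 n + shuffleSum w a n 0 := by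
  induction n with
  | zero => simp [shuffleSum_zero_right, h, mul_add, add_comm]
  | succ n ih =>
    have recursion := pow_succ_mul_pow_succ_of_mul_eq h 0 (n + 1)
    rw [pow_one, pow_zero, one_mul] at recursion
    rw [recursion, ih, shuffleSum_zero_succ, shuffleSum_zero_right, shuffleSum_zero_right]
    ring

theorem pow_succ_mul_pow_succ_eq_shuffleSum {a b w : R} (h : a * b = w * (a + b)) (m n : ℕ) :
    a ^ (m + 1) * b ^ (n + 1) = shuffleSum w b m n + shuffleSum w a n m := by
  induction m generalizing n with
  | zero => simpa using mul_pow_succ_eq_shuffleSum h n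
  | succ m ihm =>
    induction n with
    | zero =>
      rw [pow_one, mul_comm, add_comm (shuffleSum w b _ _)]
      exact mul_pow_succ_eq_shuffleSum (by rw [mul_comm, h, add_comm]) (m + 1)
    | succ n ihn =>
      rw [pow_succ_mul_pow_succ_of_mul_eq h, ihm, ihn, shuffleSum_succ_succ, shuffleSum_succ_succ]
      ring

theorem sum_Icc_choose_mul_eq_shuffleSum (w z : R) {m : ℕ} (hm : 1 ≤ m) (n : ℕ) :
    ∑ i ∈ Icc 2 (m + n + 1), ((i - 1).choose m : R) * (w ^ i * z ^ (m + n + 2 - i)) =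
      shuffleSum w z m n := by
  have drop_zeros :
      ∑ i ∈ Icc 2 (m + n + 1), ((i - 1).choose m : R) * (w ^ i * z ^ (m + n + 2 - i)) =
      ∑ i ∈ Ico (m + 1) (m + n + 2), ((i - 1).choose m : R) * (w ^ i * z ^ (m + n + 2 - i)) :=
    by
    refine (sum_subset (fun i hi => ?_) fun i hi hi' => ?_).symm
    · simp only [mem_Ico, mem_Icc] at hi ⊢; omega
    · simp only [mem_Ico, mem_Icc] at hi hi'
      rw [Nat.choose_eq_zero_of_lt (by omega), Nat.cast_zero, zero_mul]
  rw [drop_zeros, sum_Ico_eq_sum_range, shuffleSum,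
    Nat.sum_antidiagonal_eq_sum_range_succ
      (fun k l => ((m + k).choose m : R) * w ^ (m + 1 + k) * z ^ (l + 1)),
    show m + n + 2 - (m + 1) = n + 1 by omega]
  refine sum_congr rfl fun k hk => ?_
  rw [mem_range] at hk
  rw [show m + 1 + k - 1 = m + k by omega, show m + n + 2 - (m + 1 + k) = n - k + 1 by omega,
    mul_assoc]

theorem pow_mul_pow_eq_sum_Icc {a b w : R} (h : a * b = w * (a + b)) {r s : ℕ}
    (hr : 2 ≤ r) (hs : 2 ≤ s) :
    a ^ r * b ^ s = ∑ i ∈ Icc 2 (r + s - 1),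
      (((i - 1).choose (r - 1) : R) * (w ^ i * b ^ (r + s - i)) +
        ((i - 1).choose (s - 1) : R) * (w ^ i * a ^ (r + s - i))) := by
  obtain ⟨m, rfl⟩ : ∃ m, r = m + 1 := ⟨r - 1, by omega⟩
  obtain ⟨n, rfl⟩ : ∃ n, s = n + 1 := ⟨s - 1, by omega⟩
  rw [pow_succ_mul_pow_succ_eq_shuffleSum h, ← sum_Icc_choose_mul_eq_shuffleSum w b (by omega) n,
    ← sum_Icc_choose_mul_eq_shuffleSum w a (by omega) m, sum_add_distrib, add_comm n m,
    show m + 1 + (n + 1) - 1 = m + n + 1 by omega, show m + 1 + (n + 1) = m + n + 2 by omega,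
    Nat.add_sub_cancel, Nat.add_sub_cancel]

end PartialFractions

theorem one_div_pow_mul_one_div_pow_eq_sum_Icc {K : Type*} [Field K] {x y : K}
    (hx : x ≠ 0) (hy : y ≠ 0) (hxy : x + y ≠ 0) {r s : ℕ} (hr : 2 ≤ r) (hs : 2 ≤ s) :
    1 / x ^ r * (1 / y ^ s) = ∑ i ∈ Icc 2 (r + s - 1),
      (((i - 1).choose (r - 1) : K) * (1 / ((x + y) ^ i * y ^ (r + s - i))) +
        ((i - 1).choose (s - 1) : K) * (1 / ((x + y) ^ i * x ^ (r + s - i)))) := by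
  have h : x⁻¹ * y⁻¹ = (x + y)⁻¹ * (x⁻¹ + y⁻¹) := by field_simp; ring
  simpa only [one_div, mul_inv, inv_pow] using pow_mul_pow_eq_sum_Icc h hr hs

theorem tsum_finsetSum_add_of_nonneg {ι κ : Type*} {s : Finset ι} {f g : ι → κ → ℝ}
    (hf : ∀ i k, 0 ≤ f i k) (hg : ∀ i k, 0 ≤ g i k)
    (h : Summable fun k => ∑ i ∈ s, (f i k + g i k)) :
    ∑' k, ∑ i ∈ s, (f i k + g i k) = ∑ i ∈ s, (∑' k, f i k + ∑' k, g i k) := by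
  have summable : ∀ i ∈ s, Summable (f i) ∧ Summable (g i) := fun i hi => by
    have le_sum_pairs : ∀ k, f i k + g i k ≤ ∑ j ∈ s, (f j k + g j k) := fun k =>
      single_le_sum (fun j _ => add_nonneg (hf j k) (hg j k)) hi
    exact ⟨h.of_nonneg_of_le (hf i) fun k => (le_add_of_nonneg_right (hg i k)).trans (le_sum_pairs k),
      h.of_nonneg_of_le (hg i) fun k => (le_add_of_nonneg_left (hf i k)).trans (le_sum_pairs k)⟩
  rw [Summable.tsum_finsetSum fun i hi => (summable i hi).1.add (summable i hi).2]
  exact sum_congr rfl fun i hi => (summable i hi).1.tsum_add (summable i hi).2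

def oddEvenEquivOE : {n : ℕ // 0 < n ∧ Odd n} × {n : ℕ // 0 < n ∧ Even n} ≃
    {p : ℕ × ℕ // p.2 < p.1 ∧ 0 < p.2 ∧ Odd p.1 ∧ Even p.2} where
  toFun p := ⟨(p.1 + p.2, p.2),
    by have := p.1.2.1; omega, p.2.2.1, p.1.2.2.add_even p.2.2.2, p.2.2.2⟩
  invFun q := (⟨q.1.1 - q.1.2,
      by have := q.2.1; omega, Nat.Odd.sub_even q.2.1.le q.2.2.2.1 q.2.2.2.2⟩,
    ⟨q.1.2, q.2.2.1, q.2.2.2.2⟩)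
  left_inv p := by ext <;> simp
  right_inv q := Subtype.ext (Prod.ext (by have := q.2.1; dsimp; omega) rfl)

def oddEvenEquivOO : {n : ℕ // 0 < n ∧ Odd n} × {n : ℕ // 0 < n ∧ Even n} ≃
    {p : ℕ × ℕ // p.2 < p.1 ∧ 0 < p.2 ∧ Odd p.1 ∧ Odd p.2} where
  toFun p := ⟨(p.1 + p.2, p.1),
    by have := p.2.2.1; omega, p.1.2.1, p.1.2.2.add_even p.2.2.2, p.1.2.2⟩
  invFun q := (⟨q.1.2, q.2.2.1, q.2.2.2.2⟩,
    ⟨q.1.1 - q.1.2, by have := q.2.1; omega, Nat.Odd.sub_odd q.2.2.2.1 q.2.2.2.2⟩)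
  left_inv p := by ext <;> simp
  right_inv q := Subtype.ext (Prod.ext (by have := q.2.1; dsimp; omega) rfl)

theorem dzetaOE_eq_tsum (i j : ℕ) :
    dzetaOE i j = ∑' p : {n : ℕ // 0 < n ∧ Odd n} × {n : ℕ // 0 < n ∧ Even n},
      1 / ((((p.1 : ℕ) : ℝ) + (p.2 : ℕ)) ^ i * ((p.2 : ℕ) : ℝ) ^ j) :=
  (oddEvenEquivOE.tsum_eq _).symm.trans (tsum_congr fun p => by simp [oddEvenEquivOE])

theorem dzetaOO_eq_tsum (i j : ℕ) :
    dzetaOO i j = ∑' p : {n : ℕ // 0 < n ∧ Odd n} × {n : ℕ // 0 < n ∧ Even n},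
      1 / ((((p.1 : ℕ) : ℝ) + (p.2 : ℕ)) ^ i * ((p.1 : ℕ) : ℝ) ^ j) :=
  (oddEvenEquivOO.tsum_eq _).symm.trans (tsum_congr fun p => by simp [oddEvenEquivOO])

theorem shuffle_oe (r s : ℕ) (hr : 2 ≤ r) (hs : 2 ≤ s) :
    zetaO r * zetaE s =
      ∑ i ∈ Finset.Icc 2 (r + s - 1),
        (((i - 1).choose (r - 1) : ℝ) * dzetaOE i (r + s - i) +
          ((i - 1).choose (s - 1) : ℝ) * dzetaOO i (r + s - i)) := by
  have summable_odd :
      Summable fun n : {n : ℕ // 0 < n ∧ Odd n} => 1 / ((n : ℕ) : ℝ) ^ r :=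
    (Real.summable_one_div_nat_pow.mpr hr).subtype _
  have summable_even :
      Summable fun n : {n : ℕ // 0 < n ∧ Even n} => 1 / ((n : ℕ) : ℝ) ^ s :=
    (Real.summable_one_div_nat_pow.mpr hs).subtype _
  have summable_prod := summable_odd.mul_of_nonneg summable_even (fun _ => by positivity)
    (fun _ => by positivity)
  have expand (p : {n : ℕ // 0 < n ∧ Odd n} × {n : ℕ // 0 < n ∧ Even n}) :=
    one_div_pow_mul_one_div_pow_eq_sum_Icc (x := ((p.1 : ℕ) : ℝ)) (y := (p.2 : ℕ))
      (by positivity [p.1.2.1]) (by positivity [p.2.2.1]) (by positivity [p.1.2.1]) hr hs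
  rw [zetaO, zetaE, summable_odd.tsum_mul_tsum summable_even summable_prod, tsum_congr expand,
    tsum_finsetSum_add_of_nonneg (fun _ _ => by positivity) (fun _ _ => by positivity)
      (summable_prod.congr expand)]
  simp only [tsum_mul_left, dzetaOE_eq_tsum, dzetaOO_eq_tsum]
end

section
/- For integers r,s ≥ 2, the shuffle product identity holds: ζ^{o}(r) · ζ^{o}(s) = Σ_{i+j=r+s, i≥2, j≥1} [ C(i−1,r−1) + C(i−1,s−1) ] ζ^{eo}(i,j), where ζ^{o}(k) = Σ_{n odd>0} 1/n^k and ζ^{eo}(i,j) = Σ_{m>n>0, m even, n odd} 1/(m^i n^j). -/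
/-!
Iterating `1 / (x y) = (1 / x + 1 / y) / (x + y)` gives the partial fraction expansion
`1 / (x^r y^s) = ∑ᵢ [C(i-1, r-1) / ((x+y)^i y^(r+s-i)) + C(i-1, s-1) / ((x+y)^i x^(r+s-i))]`,
the algebraic shadow of the shuffle of the iterated integrals. Evaluate it at odd `u, v > 0` and
sum: the left side gives `ζ^o(r) ζ^o(s)`, while `(u, v) ↦ (u + v, v)` and
`(u, v) ↦ (u + v, u)` both map odd pairs bijectively onto the pairs `m > n > 0` with `m` even
and `n` odd, so each family on the right sums to `ζ^{eo}(i, r+s-i)`.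
-/

open Finset

section PartialFractions

variable {K : Type*} [Field K]

def partialFractionSum (z w : K) (a b : ℕ) : K :=
  ∑ k ∈ range (a + b + 1), (k.choose a : K) / (z ^ (k + 1) * w ^ (a + b + 1 - k))

theorem partialFractionSum_succ_succ (z w : K) (a b : ℕ) :
    partialFractionSum z w (a + 1) (b + 1) =
      (partialFractionSum z w a (b + 1) + partialFractionSum z w (a + 1) b) / z := by
  have hn : a + 1 + b + 1 = a + (b + 1) + 1 := by omega
  simp only [partialFractionSum, hn, ← sum_add_distrib, sum_div]
  rw [show a + 1 + (b + 1) + 1 = a + (b + 1) + 1 + 1 by omega, sum_range_succ',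
    Nat.choose_eq_zero_of_lt (Nat.succ_pos a), Nat.cast_zero, zero_div, add_zero]
  refine sum_congr rfl fun k _ => ?_
  rw [Nat.choose_succ_succ', Nat.cast_add, Nat.add_sub_add_right, pow_succ]
  ring

theorem partialFractionSum_zero_succ (z w : K) (b : ℕ) :
    partialFractionSum z w 0 (b + 1) = (1 / w ^ (b + 2) + partialFractionSum z w 0 b) / z := by
  simp only [partialFractionSum, Nat.choose_zero_right, Nat.cast_one, zero_add]
  rw [sum_range_succ', add_comm, add_div, sum_div]
  congr 1
  · simp only [Nat.sub_zero, zero_add, pow_one]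
    ring
  · refine sum_congr rfl fun k _ => ?_
    rw [Nat.add_sub_add_right, pow_succ]
    ring

theorem partialFractionSum_zero_right (z w : K) (a : ℕ) :
    partialFractionSum z w a 0 = 1 / (z ^ (a + 1) * w) := by
  rw [partialFractionSum, add_zero, sum_range_succ, Nat.choose_self, Nat.cast_one,
    Nat.add_sub_cancel_left, pow_one, add_eq_right]
  exact sum_eq_zero fun k hk => by
    rw [Nat.choose_eq_zero_of_lt (mem_range.1 hk), Nat.cast_zero, zero_div]

theorem one_div_pow_succ_mul_pow_succ {x y : K} (hx : x ≠ 0) (hy : y ≠ 0) (hxy : x + y ≠ 0)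
    (a b : ℕ) :
    1 / (x ^ (a + 1) * y ^ (b + 1)) =
      (1 / (x ^ a * y ^ (b + 1)) + 1 / (x ^ (a + 1) * y ^ b)) / (x + y) := by
  field_simp
  ring

theorem one_div_pow_mul_pow_eq_partialFractionSum {x y : K} (hx : x ≠ 0) (hy : y ≠ 0)
    (hxy : x + y ≠ 0) (a b : ℕ) :
    1 / (x ^ (a + 1) * y ^ (b + 1)) =
      partialFractionSum (x + y) y a b + partialFractionSum (x + y) x b a := by
  induction a generalizing b with
  | zero =>
    induction b with
    | zero =>
      simp only [partialFractionSum_zero_right]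
      field_simp
      ring
    | succ b ih =>
      rw [one_div_pow_succ_mul_pow_succ hx hy hxy, ih, partialFractionSum_zero_succ,
        partialFractionSum_zero_right, partialFractionSum_zero_right]
      field_simp
      ring
  | succ a iha =>
    induction b with
    | zero =>
      rw [one_div_pow_succ_mul_pow_succ hx hy hxy, iha, partialFractionSum_zero_succ,
        partialFractionSum_zero_right, partialFractionSum_zero_right]
      field_simp
      ring
    | succ b ihb =>
      rw [one_div_pow_succ_mul_pow_succ hx hy hxy, iha, ihb, partialFractionSum_succ_succ,
        partialFractionSum_succ_succ]
      ring

theorem one_div_pow_mul_pow_eq_sum_Icc {x y : K} (hx : x ≠ 0) (hy : y ≠ 0) (hxy : x + y ≠ 0)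
    {r s : ℕ} (hr : 2 ≤ r) (hs : 2 ≤ s) :
    1 / (x ^ r * y ^ s) = ∑ i ∈ Icc 2 (r + s - 1),
      (((i - 1).choose (r - 1) : K) / ((x + y) ^ i * y ^ (r + s - i)) +
        ((i - 1).choose (s - 1) : K) / ((x + y) ^ i * x ^ (r + s - i))) := by
  obtain ⟨a, rfl⟩ : ∃ a, r = a + 2 := ⟨r - 2, by omega⟩
  obtain ⟨b, rfl⟩ : ∃ b, s = b + 2 := ⟨s - 2, by omega⟩
  rw [one_div_pow_mul_pow_eq_partialFractionSum hx hy hxy (a + 1) (b + 1), partialFractionSum,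
    partialFractionSum, add_comm (b + 1) (a + 1), ← sum_add_distrib, sum_range_succ',
    ← Ico_add_one_right_eq_Icc, sum_Ico_eq_sum_range]
  simp only [Nat.choose_eq_zero_of_lt (Nat.succ_pos _), Nat.cast_zero, zero_div, add_zero]
  refine sum_congr (by congr 1; omega) fun k _ => ?_
  rw [show 2 + k - 1 = k + 1 by omega, show 2 + k = k + 1 + 1 by omega,
    show a + 2 + (b + 2) - (k + 1 + 1) = a + 1 + (b + 1) + 1 - (k + 1) by omega]
  rfl

end PartialFractions

abbrev OddPos : Type := {n : ℕ // 0 < n ∧ Odd n}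

abbrev EvenOddPair : Type := {p : ℕ × ℕ // p.2 < p.1 ∧ 0 < p.2 ∧ Even p.1 ∧ Odd p.2}

def oddPosProdEquiv : OddPos × OddPos ≃ EvenOddPair where
  toFun z := ⟨(z.1 + z.2, z.2), by have := z.1.2.1; omega, z.2.2.1,
    z.1.2.2.add_odd z.2.2.2, z.2.2.2⟩
  invFun p := (⟨p.1.1 - p.1.2, Nat.sub_pos_of_lt p.2.1,
      Nat.Even.sub_odd p.2.1.le p.2.2.2.1 p.2.2.2.2⟩, ⟨p.1.2, p.2.2.1, p.2.2.2.2⟩)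
  left_inv z := by ext <;> simp
  right_inv p := by ext <;> simp [Nat.sub_add_cancel p.2.1.le]

theorem hasSum_zetaO {k : ℕ} (hk : 1 < k) :
    HasSum (fun n : OddPos => 1 / ((n : ℕ) : ℝ) ^ k) (zetaO k) :=
  ((Real.summable_one_div_nat_pow.2 hk).subtype _).hasSum

theorem hasSum_zetaO_mul_zetaO {r s : ℕ} (hr : 1 < r) (hs : 1 < s) :
    HasSum (fun z : OddPos × OddPos => 1 / ((z.1 : ℕ) : ℝ) ^ r * (1 / ((z.2 : ℕ) : ℝ) ^ s))
      (zetaO r * zetaO s) :=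
  (hasSum_zetaO hr).mul (hasSum_zetaO hs) <|
    (hasSum_zetaO hr).summable.mul_of_nonneg (hasSum_zetaO hs).summable
      (fun _ => by positivity) fun _ => by positivity

theorem hasSum_dzetaEO {i j : ℕ} (hi : 2 ≤ i) (hij : 4 ≤ i + j) :
    HasSum (fun p : EvenOddPair => 1 / ((p.1.1 : ℝ) ^ i * (p.1.2 : ℝ) ^ j)) (dzetaEO i j) := by
  have hsq : Summable fun n : ℕ => 1 / (n : ℝ) ^ 2 := Real.summable_one_div_nat_pow.2 one_lt_two
  refine (Summable.of_nonneg_of_le (fun _ => by positivity) (fun p => ?_)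
    ((hsq.mul_of_nonneg hsq (fun _ => by positivity) fun _ => by positivity).subtype _)).hasSum
  obtain ⟨⟨m, n⟩, hnm, hn, -, -⟩ := p
  have hn1 : (1 : ℝ) ≤ n := by exact_mod_cast hn
  have hnm' : (n : ℝ) ≤ m := by exact_mod_cast hnm.le
  have hm0 : (0 : ℝ) < m := by linarith
  rw [Function.comp_apply, one_div_mul_one_div]
  refine one_div_le_one_div_of_le (by positivity) ?_
  calc (m : ℝ) ^ 2 * (n : ℝ) ^ 2 ≤ (m : ℝ) ^ 2 * (n : ℝ) ^ (i - 2 + j) := by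
        gcongr
        omega
    _ = (m : ℝ) ^ 2 * (n : ℝ) ^ (i - 2) * (n : ℝ) ^ j := by ring
    _ ≤ (m : ℝ) ^ 2 * (m : ℝ) ^ (i - 2) * (n : ℝ) ^ j := by gcongr
    _ = (m : ℝ) ^ i * (n : ℝ) ^ j := by rw [← pow_add, Nat.add_sub_cancel' hi]

theorem shuffle_oo (r s : ℕ) (hr : 2 ≤ r) (hs : 2 ≤ s) :
    zetaO r * zetaO s =
      ∑ i ∈ Finset.Icc 2 (r + s - 1),
        (((i - 1).choose (r - 1) : ℝ) + ((i - 1).choose (s - 1) : ℝ)) *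
          dzetaEO i (r + s - i) := by
  have hD : ∀ i ∈ Icc 2 (r + s - 1), HasSum (fun p : EvenOddPair =>
      1 / ((p.1.1 : ℝ) ^ i * (p.1.2 : ℝ) ^ (r + s - i))) (dzetaEO i (r + s - i)) :=
    fun i hi => hasSum_dzetaEO (mem_Icc.1 hi).1 (by grind)
  have hsum := hasSum_sum fun i hi =>
    ((oddPosProdEquiv.hasSum_iff.2 (hD i hi)).mul_left ((i - 1).choose (r - 1) : ℝ)).add
      ((((Equiv.prodComm _ _).trans oddPosProdEquiv).hasSum_iff.2 (hD i hi)).mul_left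
        ((i - 1).choose (s - 1) : ℝ))
  simp only [← add_mul] at hsum
  refine (hasSum_zetaO_mul_zetaO hr hs).unique (hsum.congr_fun fun z => ?_)
  have hu : (0 : ℝ) < (z.1 : ℕ) := by exact_mod_cast z.1.2.1
  have hv : (0 : ℝ) < (z.2 : ℕ) := by exact_mod_cast z.2.2.1
  rw [one_div_mul_one_div, one_div_pow_mul_pow_eq_sum_Icc hu.ne' hv.ne' (by positivity) hr hs]
  refine sum_congr rfl fun i _ => ?_
  simp only [oddPosProdEquiv, Equiv.coe_fn_mk, Equiv.coe_trans, Equiv.coe_prodComm,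
    Function.comp_apply, Prod.fst_swap, Prod.snd_swap, Nat.cast_add, mul_one_div,
    add_comm ((z.2 : ℕ) : ℝ)]
end

section
/- Let k ≥ 4 be even. In the formal double zeta space DZ_k of level 2 (generated by symbols Z^{eo}_{r,s}, Z^{oe}_{r,s}, Z^{oo}_{r,s} for r+s=k, r,s≥1, and Z^{o}_k, subject to the double shuffle relations of level 2), the sum formula holds: Σ_{r=2, r even}^{k−2} Z^{oo}_{r,k−r} = (1/4) Z^{o}_k. -/
/-!
Specialising (ds1) to `(r, s) = (k - 1, 1)` gives `Z^{eo}_{1,k-1} = ∑ᵢ Z^{oo}_{i,k-i}`.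
Summing (ds2) over `r` against the sign `(-1)^r`, the binomial coefficients cancel by the
alternating binomial theorem except for the term `i = 1`, and since `k` is even the left side is
symmetric under `r ↦ k - r`. This yields
`2 ∑ᵣ (-1)^r Z^{oo}_{r,k-r} - Z^o_k = -2 Z^{eo}_{1,k-1}`; writing
`(-1)^r = 2·[r even] - 1` and substituting the first identity leaves
`4 ∑_{r even} Z^{oo}_{r,k-r} = Z^o_k`, over any commutative ring.
-/

open Finset

section Reindexing

variable {M : Type*} [AddCommMonoid M]

lemma sum_Icc_one_sub_one_swap (k : ℕ) (F : ℕ → ℕ → M) :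
    ∑ r ∈ Icc 1 (k - 1), F (k - r) r = ∑ r ∈ Icc 1 (k - 1), F r (k - r) := by
  have hinv : ∀ r ∈ Icc 1 (k - 1), k - r ∈ Icc 1 (k - 1) ∧ k - (k - r) = r := by
    intro r hr
    simp only [mem_Icc] at hr ⊢
    omega
  exact sum_nbij' (k - ·) (k - ·) (fun r hr => (hinv r hr).1) (fun r hr => (hinv r hr).1)
    (fun r hr => (hinv r hr).2) (fun r hr => (hinv r hr).2) (fun r hr => by rw [(hinv r hr).2])

lemma sum_Icc_one_sub_one_eq_sum_range (k : ℕ) (f : ℕ → M) :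
    ∑ r ∈ Icc 1 (k - 1), f r = ∑ j ∈ range (k - 1), f (j + 1) := by
  rw [range_eq_Ico, sum_Ico_add' f 0 (k - 1) 1, zero_add, Ico_add_one_right_eq_Icc]

end Reindexing

section Alternating

variable {R : Type*} [CommRing R] {k : ℕ}

lemma sum_Icc_neg_one_pow_mul_swap (hke : Even k) (F : ℕ → ℕ → R) :
    ∑ r ∈ Icc 1 (k - 1), (-1) ^ r * F (k - r) r =
      ∑ r ∈ Icc 1 (k - 1), (-1) ^ r * F r (k - r) := by
  rw [sum_Icc_one_sub_one_swap k (fun a b => (-1) ^ b * F a b)]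
  refine sum_congr rfl fun r hr => ?_
  have hrk : r ≤ k := (mem_Icc.1 hr).2.trans (Nat.sub_le k 1)
  rw [neg_one_pow_congr (by simp [Nat.even_sub hrk, hke] : Even (k - r) ↔ Even r)]

lemma sum_Icc_neg_one_pow (hk : 2 ≤ k) (hke : Even k) :
    ∑ r ∈ Icc 1 (k - 1), (-1 : R) ^ r = -1 := by
  have hodd : ¬ Even (k - 1) := by rw [Nat.even_sub (by omega)]; simp [hke]
  rw [sum_Icc_one_sub_one_eq_sum_range]
  simp [pow_succ, neg_one_geom_sum, hodd]

lemma Int.alternating_sum_range_choose_of_le {n m : ℕ} (h : n ≤ m) :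
    ∑ j ∈ Finset.range (m + 1), ((-1) ^ j * n.choose j : ℤ) = if n = 0 then 1 else 0 := by
  cases n with
  | zero => simp [Finset.sum_range_succ']
  | succ n =>
    rw [Int.alternating_sum_range_choose_eq_choose, Nat.choose_eq_zero_of_lt (by omega)]
    simp

lemma sum_Icc_neg_one_pow_mul_choose {n : ℕ} (h : n + 2 ≤ k) :
    ∑ r ∈ Icc 1 (k - 1), (-1 : R) ^ r * n.choose (r - 1) = if n = 0 then -1 else 0 := by
  obtain ⟨m, rfl⟩ : ∃ m, k = m + 2 := ⟨k - 2, by omega⟩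
  have halt := congrArg (Int.cast : ℤ → R)
    (Int.alternating_sum_range_choose_of_le (m := m) (by omega : n ≤ m))
  push_cast at halt
  rw [sum_Icc_one_sub_one_eq_sum_range, show m + 2 - 1 = m + 1 by omega]
  simp only [pow_succ, Nat.add_sub_cancel, mul_neg_one, neg_mul, sum_neg_distrib, halt]
  split_ifs <;> simp

lemma sum_Icc_neg_one_pow_mul_eq_even_sub (hke : Even k) (f : ℕ → R) :
    ∑ r ∈ Icc 1 (k - 1), (-1) ^ r * f r =
      2 * ∑ r ∈ Icc 2 (k - 2), (if Even r then f r else 0) - ∑ r ∈ Icc 1 (k - 1), f r := by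
  have hends : ∑ r ∈ Icc 2 (k - 2), (if Even r then f r else 0) =
      ∑ r ∈ Icc 1 (k - 1), (if Even r then f r else 0) := by
    refine sum_subset (fun r hr => by simp only [mem_Icc] at hr ⊢; omega) fun r hr hr' => ?_
    simp only [mem_Icc] at hr hr'
    rw [if_neg (by rw [Nat.even_iff] at hke ⊢; omega)]
  rw [hends, mul_sum, ← sum_sub_distrib]
  refine sum_congr rfl fun r _ => ?_
  rcases Nat.even_or_odd r with he | ho
  · rw [he.neg_one_pow, if_pos he]; ring
  · rw [ho.neg_one_pow, if_neg (Nat.not_even_iff_odd.2 ho)]; ring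

end Alternating

section DoubleShuffle

variable {R : Type*} [CommRing R] {k : ℕ}

def DoubleShuffle1 (k : ℕ) (Zeo Zoe Zoo : ℕ → ℕ → R) : Prop :=
  ∀ r s : ℕ, 1 ≤ r → 1 ≤ s → r + s = k →
    Zoe r s + Zeo s r =
      ∑ i ∈ Icc 1 (k - 1),
        (((i - 1).choose (r - 1) : R) * Zoe i (k - i) +
          ((i - 1).choose (s - 1) : R) * Zoo i (k - i))

def DoubleShuffle2 (k : ℕ) (Zeo Zoo : ℕ → ℕ → R) (Zo : R) : Prop :=
  ∀ r s : ℕ, 1 ≤ r → 1 ≤ s → r + s = k →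
    Zoo r s + Zoo s r + Zo =
      ∑ i ∈ Icc 1 (k - 1),
        (((i - 1).choose (r - 1) : R) + ((i - 1).choose (s - 1) : R)) * Zeo i (k - i)

lemma DoubleShuffle1.zeo_one_eq_sum_zoo {Zeo Zoe Zoo : ℕ → ℕ → R}
    (h : DoubleShuffle1 k Zeo Zoe Zoo) (hk : 2 ≤ k) :
    Zeo 1 (k - 1) = ∑ i ∈ Icc 1 (k - 1), Zoo i (k - i) := by
  have hzoe : ∑ i ∈ Icc 1 (k - 1), ((i - 1).choose (k - 1 - 1) : R) * Zoe i (k - i) =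
      Zoe (k - 1) 1 := by
    rw [sum_eq_single_of_mem (k - 1) (by simp; omega), Nat.choose_self, Nat.cast_one, one_mul,
      Nat.sub_sub_self (by omega)]
    intro i hi hne
    simp only [mem_Icc] at hi
    rw [Nat.choose_eq_zero_of_lt (by omega), Nat.cast_zero, zero_mul]
  have hds := h (k - 1) 1 (by omega) le_rfl (by omega)
  rw [sum_add_distrib, hzoe] at hds
  simpa using hds

lemma DoubleShuffle2.alternating_sum_eq {Zeo Zoo : ℕ → ℕ → R} {Zo : R}
    (h : DoubleShuffle2 k Zeo Zoo Zo) (hk : 2 ≤ k) (hke : Even k) :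
    2 * ∑ r ∈ Icc 1 (k - 1), (-1) ^ r * Zoo r (k - r) - Zo = -2 * Zeo 1 (k - 1) := by
  calc 2 * ∑ r ∈ Icc 1 (k - 1), (-1) ^ r * Zoo r (k - r) - Zo
      = ∑ r ∈ Icc 1 (k - 1), (-1) ^ r * (Zoo r (k - r) + Zoo (k - r) r + Zo) := by
        simp only [mul_add, sum_add_distrib, ← sum_mul, sum_Icc_neg_one_pow hk hke,
          sum_Icc_neg_one_pow_mul_swap hke Zoo]
        ring
    _ = ∑ r ∈ Icc 1 (k - 1), ∑ i ∈ Icc 1 (k - 1), (-1) ^ r *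
          ((((i - 1).choose (r - 1) : R) + ((i - 1).choose (k - r - 1) : R)) * Zeo i (k - i)) := by
        refine sum_congr rfl fun r hr => ?_
        simp only [mem_Icc] at hr
        rw [h r (k - r) hr.1 (by omega) (by omega), mul_sum]
    _ = ∑ i ∈ Icc 1 (k - 1), (∑ r ∈ Icc 1 (k - 1), (-1) ^ r *
          (((i - 1).choose (r - 1) : R) + ((i - 1).choose (k - r - 1) : R))) * Zeo i (k - i) := by
        rw [sum_comm]
        simp only [sum_mul, mul_assoc]
    _ = ∑ i ∈ Icc 1 (k - 1), (if i = 1 then -2 else 0) * Zeo i (k - i) := by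
        refine sum_congr rfl fun i hi => ?_
        simp only [mem_Icc] at hi
        have hswap := sum_Icc_neg_one_pow_mul_swap hke fun a _ => ((i - 1).choose (a - 1) : R)
        have hchoose : ∑ r ∈ Icc 1 (k - 1), (-1) ^ r * ((i - 1).choose (r - 1) : R) =
            if i = 1 then -1 else 0 := by
          rw [sum_Icc_neg_one_pow_mul_choose (by omega)]
          simp only [show i - 1 = 0 ↔ i = 1 by omega]
        simp only [mul_add, sum_add_distrib, hswap, hchoose]
        split_ifs <;> norm_num
    _ = -2 * Zeo 1 (k - 1) := by
        simp only [ite_mul, zero_mul, sum_ite_eq', mem_Icc]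
        rw [if_pos (by omega)]

theorem four_mul_sum_zoo_even_eq {Zeo Zoe Zoo : ℕ → ℕ → R} {Zo : R}
    (hk : 2 ≤ k) (hke : Even k)
    (h1 : DoubleShuffle1 k Zeo Zoe Zoo) (h2 : DoubleShuffle2 k Zeo Zoo Zo) :
    4 * ∑ r ∈ Icc 2 (k - 2), (if Even r then Zoo r (k - r) else 0) = Zo := by
  have hA := h2.alternating_sum_eq hk hke
  rw [sum_Icc_neg_one_pow_mul_eq_even_sub hke, ← h1.zeo_one_eq_sum_zoo hk] at hA
  linear_combination hA

end DoubleShuffle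

/-- Sum formula in the formal double zeta space of level 2: any assignment of rationals
to the symbols satisfying the level-2 double shuffle relations satisfies
Σ_{r even, 2 ≤ r ≤ k−2} Z^{oo}_{r,k−r} = (1/4) Z^{o}_k. -/
theorem sum_formula_level_two (k : ℕ) (hk : 4 ≤ k) (hke : Even k)
    (Zeo Zoe Zoo : ℕ → ℕ → ℚ) (Zo : ℚ)
    (hds1 : ∀ r s : ℕ, 1 ≤ r → 1 ≤ s → r + s = k →
      Zoe r s + Zeo s r =
        ∑ i ∈ Finset.Icc 1 (k - 1),
          (((i - 1).choose (r - 1) : ℚ) * Zoe i (k - i) +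
            ((i - 1).choose (s - 1) : ℚ) * Zoo i (k - i)))
    (hds2 : ∀ r s : ℕ, 1 ≤ r → 1 ≤ s → r + s = k →
      Zoo r s + Zoo s r + Zo =
        ∑ i ∈ Finset.Icc 1 (k - 1),
          (((i - 1).choose (r - 1) : ℚ) + ((i - 1).choose (s - 1) : ℚ)) * Zeo i (k - i)) :
    ∑ r ∈ Finset.Icc 2 (k - 2), (if Even r then Zoo r (k - r) else 0) = (1 / 4) * Zo := by
  linear_combination (1 / 4) * four_mul_sum_zoo_even_eq (by omega) hke hds1 hds2
end

section
/- Let k be even, and let ε = [[−1,0],[0,1]], T = [[1,1],[0,1]], S = [[0,−1],[1,0]], δ = [[0,1],[1,0]], TST·ε = [[−1,0],[−1,1]] act on polynomials of degree ≤ k−2 by the weight k−2 slash action f|γ(x) = (cx+d)^{k−2} f((ax+b)/(cx+d)). Suppose f satisfies f|(TSTε) = f and set g = (1/2) f|(Tε). Then the expression (f|δ − g|(TST+TSε))(x₁) + (f|(1−TST))(x₂) − (f|TSε − g|(1+δ))(x₃) equals (f|δ(1−ε))(x₁) + (f|(1−ε))(x₂) − (f|T(1−ε))(x₃). -/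
open Polynomial

/-- Weight-`w` slash action of the matrix [[a,b],[c,d]] on a polynomial of degree ≤ w:
`(f | γ)(x) = (cx+d)^w f((ax+b)/(cx+d))`, written polynomially as
`Σ_i coeff_i (aX+b)^i (cX+d)^{w−i}`. -/
noncomputable def slash (w : ℕ) (a b c d : ℚ) (f : Polynomial ℚ) : Polynomial ℚ :=
  ∑ i ∈ Finset.range (w + 1),
    C (f.coeff i) * (C a * X + C b) ^ i * (C c * X + C d) ^ (w - i)

lemma natDegree_slash_le (w : ℕ) (a b c d : ℚ) (f : Polynomial ℚ) :
    (slash w a b c d f).natDegree ≤ w := by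
  apply Polynomial.natDegree_sum_le_of_forall_le
  intro i hi
  simp only [Finset.mem_range, Nat.lt_succ_iff] at hi
  calc (C (f.coeff i) * (C a * X + C b) ^ i * (C c * X + C d) ^ (w - i)).natDegree
      ≤ (C (f.coeff i) * (C a * X + C b) ^ i).natDegree + ((C c * X + C d) ^ (w - i)).natDegree :=
        natDegree_mul_le
    _ ≤ ((C (f.coeff i)).natDegree + ((C a * X + C b) ^ i).natDegree) + (w - i) * (C c * X + C d).natDegree := by
        gcongr
        exacts [natDegree_mul_le, natDegree_pow_le]
    _ ≤ (0 + i * 1) + (w - i) * 1 := by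
        gcongr
        exacts [le_of_eq (natDegree_C _), natDegree_pow_le.trans (by gcongr; exact natDegree_linear_le), natDegree_linear_le]
    _ ≤ w := by omega

lemma eval_slash (w : ℕ) (a b c d : ℚ) (f : Polynomial ℚ) (hdeg : f.natDegree ≤ w)
    (x : ℚ) (hv : c * x + d ≠ 0) :
    (slash w a b c d f).eval x = (c * x + d) ^ w * f.eval ((a * x + b) / (c * x + d)) := by
  rw [slash, Polynomial.eval_finset_sum,
      Polynomial.eval_eq_sum_range' (Nat.lt_succ_of_le hdeg), Finset.mul_sum]
  refine Finset.sum_congr rfl fun i hi => ?_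
  simp only [Finset.mem_range, Nat.lt_succ_iff] at hi
  simp only [eval_mul, eval_add, eval_pow, eval_C, eval_X]
  rw [div_pow, pow_sub₀ _ hv hi]
  field_simp

lemma finite_linear_roots (c d : ℚ) (h : c ≠ 0 ∨ d ≠ 0) : {x : ℚ | c * x + d = 0}.Finite := by
  rcases eq_or_ne c 0 with hc | hc
  · subst hc
    have hd : d ≠ 0 := h.resolve_left (by simp)
    convert Set.finite_empty
    ext x; simp [hd]
  · apply Set.Finite.subset (Set.finite_singleton (-d / c))
    intro x hx
    simp only [Set.mem_setOf_eq] at hx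
    simp only [Set.mem_singleton_iff]
    field_simp
    linarith

lemma slash_comp (w : ℕ) (a b c d a' b' c' d' : ℚ) (f : Polynomial ℚ)
    (hdeg : f.natDegree ≤ w)
    (h1 : c' ≠ 0 ∨ d' ≠ 0)
    (h2 : c * a' + d * c' ≠ 0 ∨ c * b' + d * d' ≠ 0) :
    slash w a' b' c' d' (slash w a b c d f)
      = slash w (a * a' + b * c') (a * b' + b * d') (c * a' + d * c') (c * b' + d * d') f := by
  have key : ∀ x : ℚ, c' * x + d' ≠ 0 → (c * a' + d * c') * x + (c * b' + d * d') ≠ 0 →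
      eval x (slash w a' b' c' d' (slash w a b c d f))
        = eval x (slash w (a * a' + b * c') (a * b' + b * d') (c * a' + d * c') (c * b' + d * d') f) := by
    intro x hx1 hx2
    have hy : c * ((a' * x + b') / (c' * x + d')) + d
        = ((c * a' + d * c') * x + (c * b' + d * d')) / (c' * x + d') := by
      rw [eq_div_iff hx1, add_mul, mul_assoc, div_mul_cancel₀ _ hx1]; ring
    have hy0 : c * ((a' * x + b') / (c' * x + d')) + d ≠ 0 := by
      rw [hy]; exact div_ne_zero hx2 hx1
    rw [eval_slash _ _ _ _ _ _ (natDegree_slash_le w a b c d f) x hx1,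
        eval_slash _ _ _ _ _ _ hdeg _ hy0,
        eval_slash _ _ _ _ _ _ hdeg x hx2, hy]
    have harg : (a * ((a' * x + b') / (c' * x + d')) + b)
        / ((((c * a' + d * c') * x + (c * b' + d * d')) / (c' * x + d')))
        = ((a * a' + b * c') * x + (a * b' + b * d'))
          / ((c * a' + d * c') * x + (c * b' + d * d')) := by
      rw [div_div_eq_mul_div]
      congr 1
      rw [add_mul, mul_assoc, div_mul_cancel₀ _ hx1]; ring
    rw [harg, div_pow, ← mul_assoc, mul_div_cancel₀]
    exact pow_ne_zero _ hx1
  by_contra hne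
  have hfin : ({x : ℚ | c' * x + d' = 0} ∪ {x : ℚ | (c * a' + d * c') * x + (c * b' + d * d') = 0}).Finite :=
    (finite_linear_roots _ _ h1).union (finite_linear_roots _ _ h2)
  have hinf : {x : ℚ | IsRoot (slash w a' b' c' d' (slash w a b c d f)
      - slash w (a * a' + b * c') (a * b' + b * d') (c * a' + d * c') (c * b' + d * d') f) x}.Infinite := by
    apply Set.Infinite.mono _ hfin.infinite_compl
    intro x hx
    simp only [Set.mem_compl_iff, Set.mem_union, Set.mem_setOf_eq, not_or] at hx
    simp only [Set.mem_setOf_eq, IsRoot, eval_sub, key x hx.1 hx.2, sub_self]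
  exact (sub_ne_zero.mpr hne) (Polynomial.eq_zero_of_infinite_isRoot _ hinf)

lemma slash_neg (w : ℕ) (hw : Even w) (a b c d : ℚ) (f : Polynomial ℚ) :
    slash w (-a) (-b) (-c) (-d) f = slash w a b c d f := by
  unfold slash
  refine Finset.sum_congr rfl fun i hi => ?_
  simp only [Finset.mem_range, Nat.lt_succ_iff] at hi
  have h1 : (C (-a) * X + C (-b) : Polynomial ℚ) = -(C a * X + C b) := by
    simp [map_neg]; ring
  have h2 : (C (-c) * X + C (-d) : Polynomial ℚ) = -(C c * X + C d) := by
    simp [map_neg]; ring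
  have h3 : (-(C a * X + C b) : Polynomial ℚ) ^ i * (-(C c * X + C d)) ^ (w - i)
      = (-1 : Polynomial ℚ) ^ (i + (w - i)) * ((C a * X + C b) ^ i * (C c * X + C d) ^ (w - i)) := by
    rw [pow_add, neg_pow, neg_pow (C c * X + C d)]; ring
  rw [h1, h2, mul_assoc, h3, Nat.add_sub_cancel' hi, hw.neg_one_pow, one_mul, mul_assoc]

lemma slash_smul (w : ℕ) (a b c d r : ℚ) (f : Polynomial ℚ) :
    slash w a b c d (r • f) = r • slash w a b c d f := by
  unfold slash
  rw [Finset.smul_sum]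
  refine Finset.sum_congr rfl fun i hi => ?_
  simp [Polynomial.smul_eq_C_mul]
  ring

/-- With T=[[1,1],[0,1]], S=[[0,−1],[1,0]], ε=[[−1,0],[0,1]], δ=[[0,1],[1,0]]:
if f|(TSTε) = f and g = (1/2) f|(Tε), then
(f|δ − g|(TST+TSε))(x₁) + (f|(1−TST))(x₂) − (f|TSε − g|(1+δ))(x₃)
  = (f|δ(1−ε))(x₁) + (f|(1−ε))(x₂) − (f|T(1−ε))(x₃).
Matrices: δ=(0,1,1,0), TST=(1,0,1,1), TSε=(−1,−1,−1,0), δε=(0,1,−1,0),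
ε=(−1,0,0,1), T=(1,1,0,1), Tε=(−1,1,0,1), TSTε=(−1,0,−1,1). -/
theorem slash_group_ring_identity (k : ℕ) (hke : Even k) (hk : 2 ≤ k)
    (f g : Polynomial ℚ) (hdeg : f.natDegree ≤ k - 2)
    (hf : slash (k - 2) (-1) 0 (-1) 1 f = f)
    (hg : g = (1 / 2 : ℚ) • slash (k - 2) (-1) 1 0 1 f) :
    ∀ x₁ x₂ x₃ : ℚ,
      (slash (k - 2) 0 1 1 0 f
          - (slash (k - 2) 1 0 1 1 g + slash (k - 2) (-1) (-1) (-1) 0 g)).eval x₁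
        + (f - slash (k - 2) 1 0 1 1 f).eval x₂
        - (slash (k - 2) (-1) (-1) (-1) 0 f - (g + slash (k - 2) 0 1 1 0 g)).eval x₃
      = (slash (k - 2) 0 1 1 0 f - slash (k - 2) 0 1 (-1) 0 f).eval x₁
        + (f - slash (k - 2) (-1) 0 0 1 f).eval x₂
        - (slash (k - 2) 1 1 0 1 f - slash (k - 2) (-1) 1 0 1 f).eval x₃ := by
  have hw : Even (k - 2) := (Nat.even_sub hk).mpr (by simp [hke])
  set w := k - 2 with hwdef
  -- c1 : slash ε f = slash TST f
  have c1 := slash_comp w (-1) 0 (-1) 1 (-1) 0 0 1 f hdeg (Or.inr one_ne_zero) (by norm_num)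
  rw [hf] at c1; norm_num at c1
  -- c2 : slash (0,1,1,1) f = slash S f
  have c2 := slash_comp w (-1) 0 (-1) 1 0 1 1 1 f hdeg (Or.inl one_ne_zero) (by norm_num)
  rw [hf] at c2; norm_num at c2
  -- hS : slash S f = slash δε f
  have hS := slash_neg w hw 0 1 (-1) 0 f
  simp only [neg_zero, neg_neg] at hS
  -- c3 : slash TSε f = slash T f
  have c3 := slash_comp w (-1) 0 (-1) 1 (-1) (-1) (-1) 0 f hdeg (Or.inl (by norm_num)) (by norm_num)
  rw [hf] at c3; norm_num at c3
  -- c4 : slash TS f = slash Tε f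
  have c4 := slash_comp w (-1) 0 (-1) 1 1 (-1) 1 0 f hdeg (Or.inl one_ne_zero) (by norm_num)
  rw [hf] at c4; norm_num at c4
  -- g-compositions
  have c5 : slash w 1 0 1 1 g = (1 / 2 : ℚ) • slash w 0 1 1 1 f := by
    rw [hg, slash_smul]
    have := slash_comp w (-1) 1 0 1 1 0 1 1 f hdeg (Or.inl one_ne_zero) (by norm_num)
    norm_num at this; rw [this]
  have c6 : slash w (-1) (-1) (-1) 0 g = (1 / 2 : ℚ) • slash w 0 1 (-1) 0 f := by
    rw [hg, slash_smul]
    have := slash_comp w (-1) 1 0 1 (-1) (-1) (-1) 0 f hdeg (Or.inl (by norm_num)) (by norm_num)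
    norm_num at this; rw [this]
  have c7 : slash w 0 1 1 0 g = (1 / 2 : ℚ) • slash w 1 (-1) 1 0 f := by
    rw [hg, slash_smul]
    have := slash_comp w (-1) 1 0 1 0 1 1 0 f hdeg (Or.inl one_ne_zero) (by norm_num)
    norm_num at this; rw [this]
  have PA : slash w 0 1 1 0 f - (slash w 1 0 1 1 g + slash w (-1) (-1) (-1) 0 g)
      = slash w 0 1 1 0 f - slash w 0 1 (-1) 0 f := by
    rw [c5, c6, c2, hS]
    congr 1
    rw [← add_smul]; norm_num
  have PB : f - slash w 1 0 1 1 f = f - slash w (-1) 0 0 1 f := by rw [c1]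
  have PC : slash w (-1) (-1) (-1) 0 f - (g + slash w 0 1 1 0 g)
      = slash w 1 1 0 1 f - slash w (-1) 1 0 1 f := by
    rw [c3, c7, hg, c4]
    congr 1
    rw [← add_smul]; norm_num
  intro x₁ x₂ x₃
  rw [PA, PB, PC]
end

section
/- Let k ≥ 4 be even and let Q_k be the (k/2−1)×(k/2−2) integer matrix with entries Q_k[i,j] = C(2j, 2i−1) − C(2j, k−2i−1) for 1 ≤ i ≤ k/2−1 and 1 ≤ j ≤ k/2−2, where C(n,m) is the binomial coefficient (equal to 0 if m < 0 or m > n). Then the rank of Q_k equals ⌊(k+2)/4⌋ − 1. -/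
/-- The matrix Q_k with entries C(2j, 2i−1) − C(2j, k−2i−1) (1 ≤ i ≤ k/2−1,
1 ≤ j ≤ k/2−2) has rank ⌊(k+2)/4⌋ − 1. -/
theorem rank_Qk (k : ℕ) (hk : 4 ≤ k) (hke : Even k) :
    (Matrix.of fun (i : Fin (k / 2 - 1)) (j : Fin (k / 2 - 2)) =>
        (((2 * ((j : ℕ) + 1)).choose (2 * ((i : ℕ) + 1) - 1) : ℚ) -
          ((2 * ((j : ℕ) + 1)).choose (k - 2 * ((i : ℕ) + 1) - 1) : ℚ))).rank =
      (k + 2) / 4 - 1 := by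
  have hk2 : k / 2 * 2 = k := Nat.div_mul_cancel hke.two_dvd
  set r := (k + 2) / 4 - 1 with hr
  have hrn₁ : r ≤ k / 2 - 1 := by omega
  have hrn₂ : r ≤ k / 2 - 2 := by omega
  set M : Matrix (Fin (k / 2 - 1)) (Fin (k / 2 - 2)) ℚ :=
    Matrix.of fun (i : Fin (k / 2 - 1)) (j : Fin (k / 2 - 2)) =>
        (((2 * ((j : ℕ) + 1)).choose (2 * ((i : ℕ) + 1) - 1) : ℚ) -
          ((2 * ((j : ℕ) + 1)).choose (k - 2 * ((i : ℕ) + 1) - 1) : ℚ)) with hM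
  -- row-selection matrix
  set P : Matrix (Fin r) (Fin (k / 2 - 1)) ℚ :=
    Matrix.of (fun t i => if (t : ℕ) = (i : ℕ) then 1 else 0) with hP
  set B : Matrix (Fin r) (Fin (k / 2 - 2)) ℚ := P * M with hBdef
  have hB : ∀ (t : Fin r) (j : Fin (k / 2 - 2)), B t j = M (Fin.castLE hrn₁ t) j := by
    intro t j
    simp only [hBdef, Matrix.mul_apply, hP, Matrix.of_apply]
    rw [Finset.sum_eq_single (Fin.castLE hrn₁ t)]
    · simp
    · intro i _ hi
      rw [if_neg, zero_mul]
      intro h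
      exact hi (by apply Fin.ext; exact h.symm)
    · simp
  -- column-selection matrix
  set Pc : Matrix (Fin (k / 2 - 2)) (Fin r) ℚ :=
    Matrix.of (fun j t => if (j : ℕ) = (t : ℕ) then 1 else 0) with hPc
  set C : Matrix (Fin r) (Fin r) ℚ := B * Pc with hCdef
  have hC : ∀ (t s : Fin r), C t s = M (Fin.castLE hrn₁ t) (Fin.castLE hrn₂ s) := by
    intro t s
    simp only [hCdef, Matrix.mul_apply, hPc, Matrix.of_apply]
    rw [Finset.sum_eq_single (Fin.castLE hrn₂ s)]
    · rw [hB]; simp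
    · intro j _ hj
      rw [if_neg, mul_zero]
      intro h
      exact hj (by apply Fin.ext; exact h)
    · simp
  apply le_antisymm
  · -- upper bound: M = A * B with B having r rows
    set A : Matrix (Fin (k / 2 - 1)) (Fin r) ℚ :=
      Matrix.of (fun i t =>
        if (i : ℕ) = (t : ℕ) then 1
        else if (k / 2 - 2 - (i : ℕ)) = (t : ℕ) then -1 else 0) with hA
    have hAB : M = A * B := by
      ext i j
      have hiLt : (i : ℕ) < k / 2 - 1 := i.isLt
      simp only [Matrix.mul_apply]
      by_cases hi : (i : ℕ) < r
      · rw [Finset.sum_eq_single (⟨(i : ℕ), hi⟩ : Fin r)]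
        · rw [hB]
          have : Fin.castLE hrn₁ (⟨(i : ℕ), hi⟩ : Fin r) = i := by apply Fin.ext; rfl
          rw [this]
          simp [hA]
        · intro t _ ht
          have h1 : ¬((i : ℕ) = (t : ℕ)) := by
            intro h; exact ht (by apply Fin.ext; exact h.symm)
          have ht' : (t : ℕ) < r := t.isLt
          have h2 : ¬((k / 2 - 2 - (i : ℕ)) = (t : ℕ)) := by omega
          simp [hA, h1, h2]
        · simp
      · by_cases hc : k / 2 - 2 - (i : ℕ) < r
        · rw [Finset.sum_eq_single (⟨k / 2 - 2 - (i : ℕ), hc⟩ : Fin r)]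
          · have h1 : ¬((i : ℕ) = (k / 2 - 2 - (i : ℕ))) := by omega
            rw [hB]
            have e1 : 2 * ((Fin.castLE hrn₁ (⟨k / 2 - 2 - (i : ℕ), hc⟩ : Fin r) : ℕ) + 1) - 1
                = k - 2 * ((i : ℕ) + 1) - 1 := by
              simp only [Fin.coe_castLE]; omega
            have e2 : k - 2 * ((Fin.castLE hrn₁ (⟨k / 2 - 2 - (i : ℕ), hc⟩ : Fin r) : ℕ) + 1) - 1
                = 2 * ((i : ℕ) + 1) - 1 := by
              simp only [Fin.coe_castLE]; omega
            simp only [hM, hA, Matrix.of_apply, e1, e2, h1, if_false, if_true, Fin.val_mk,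
              if_pos rfl]
            ring
          · intro t _ ht
            have h1 : ¬((i : ℕ) = (t : ℕ)) := by
              have := t.isLt; omega
            have h2 : ¬((k / 2 - 2 - (i : ℕ)) = (t : ℕ)) := by
              intro h; exact ht (by apply Fin.ext; exact h.symm)
            simp [hA, h1, h2]
          · simp
        · -- middle (zero) row
          have hmid : 2 * ((i : ℕ) + 1) - 1 = k - 2 * ((i : ℕ) + 1) - 1 := by omega
          have hz : ∀ t : Fin r, A i t = 0 := by
            intro t
            have h1 : ¬((i : ℕ) = (t : ℕ)) := by have := t.isLt; omega
            have h2 : ¬((k / 2 - 2 - (i : ℕ)) = (t : ℕ)) := by have := t.isLt; omega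
            simp [hA, h1, h2]
          simp only [hM, Matrix.of_apply, hmid]
          rw [Finset.sum_eq_zero (fun t _ => by rw [hz t, zero_mul])]
          ring
    calc M.rank = (A * B).rank := by rw [← hAB]
      _ ≤ B.rank := Matrix.rank_mul_le_right A B
      _ ≤ Fintype.card (Fin r) := B.rank_le_card_height
      _ = r := Fintype.card_fin r
  · -- lower bound: C is an r×r submatrix with nonzero determinant
    have hCtri : C.BlockTriangular id := by
      intro s t hts
      have hts' : (t : ℕ) < (s : ℕ) := hts
      have hsLt : (s : ℕ) < r := s.isLt
      rw [hC]
      simp only [hM, Matrix.of_apply, Fin.coe_castLE]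
      have h1 : 2 * ((t : ℕ) + 1) < 2 * ((s : ℕ) + 1) - 1 := by omega
      have h2 : 2 * ((t : ℕ) + 1) < k - 2 * ((s : ℕ) + 1) - 1 := by omega
      rw [Nat.choose_eq_zero_of_lt h1, Nat.choose_eq_zero_of_lt h2]
      norm_num
    have hdiag : ∀ s : Fin r, C s s = 2 * ((s : ℕ) + 1) := by
      intro s
      have hsLt : (s : ℕ) < r := s.isLt
      rw [hC]
      simp only [hM, Matrix.of_apply, Fin.coe_castLE]
      have h2 : 2 * ((s : ℕ) + 1) < k - 2 * ((s : ℕ) + 1) - 1 := by omega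
      rw [Nat.choose_eq_zero_of_lt h2]
      have h1 : (2 * ((s : ℕ) + 1)).choose (2 * ((s : ℕ) + 1) - 1) = 2 * ((s : ℕ) + 1) := by
        rw [Nat.choose_symm (n := 2 * ((s : ℕ) + 1)) (k := 1) (by omega),
          Nat.choose_one_right]
      rw [h1]
      push_cast
      ring
    have hdet : C.det ≠ 0 := by
      rw [Matrix.det_of_upperTriangular hCtri]
      apply Finset.prod_ne_zero_iff.mpr
      intro s _
      rw [hdiag s]
      positivity
    have hCrank : C.rank = r := by
      rw [Matrix.rank_of_isUnit C ((Matrix.isUnit_iff_isUnit_det C).mpr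
        (isUnit_iff_ne_zero.mpr hdet))]
      exact Fintype.card_fin r
    calc r = C.rank := hCrank.symm
      _ ≤ B.rank := Matrix.rank_mul_le_left B Pc
      _ ≤ M.rank := Matrix.rank_mul_le_right P M
end

section
/- Let k ≥ 4 be even. Define W_k^{+,0} as the space of polynomials P(X) = Σ_{i=2, i even}^{k−4} a_i X^i with rational coefficients such that P|_{k−2}(1−T)(1+M) = 0, where T = [[1,1],[0,1]], M = [[−1,−1],[2,1]], and the slash action is f|γ(X) = (cX+d)^{k−2} f((aX+b)/(cX+d)) extended linearly to the group ring. Then dim_Q W_k^{+,0} = ⌊k/4⌋ − 1. -/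
/-!
Substituting `X = (Y - 1) / 2` turns `2X + 1` into `Y`, and for an even `P` of degree at most
`w = k - 2` the relation `P|(1 - T)(1 + M)` becomes `R(Y) - Y ^ w R(1 / Y)` with
`R(Y) = P((Y - 1) / 2) - P((Y + 1) / 2)`, an odd polynomial. Such an odd `Q` with
`Y ^ w Q(1 / Y) = -Q` vanishes as soon as its coefficients of `Y, Y ^ 3, …, Y ^ (2r - 1)` do, where
`r = ⌈n / 2⌉` and `n = (k - 4) / 2` is the number of free coefficients `a_2, …, a_(k-4)`. On
`X ^ 2, …, X ^ (2r)` these `r` linear forms form a triangular matrix with diagonal entries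
proportional to `binomial(2t + 2, 2t + 1) ≠ 0`, so they are independent and the dimension is
`n - ⌈n / 2⌉ = ⌊k / 4⌋ - 1`.
-/

open Polynomial

/-- `P|(1−T)(1+M) = P + P|M − P|T − P|TM` with T=[[1,1],[0,1]], M=[[−1,−1],[2,1]],
TM=[[1,0],[2,1]]. -/
noncomputable def periodRel (w : ℕ) (P : Polynomial ℚ) : Polynomial ℚ :=
  P + slash w (-1) (-1) 2 1 P - slash w 1 1 0 1 P - slash w 1 0 2 1 P

namespace PeriodPoly

noncomputable def slashₗ (w : ℕ) (a b c d : ℚ) : ℚ[X] →ₗ[ℚ] ℚ[X] where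
  toFun := slash w a b c d
  map_add' f g := by simp only [slash, coeff_add, C_add, add_mul, Finset.sum_add_distrib]
  map_smul' r f := by
    simp only [slash, C_mul, RingHom.id_apply, Finset.smul_sum,
      smul_eq_C_mul, mul_assoc, coeff_C_mul]

noncomputable def periodRelₗ (w : ℕ) : ℚ[X] →ₗ[ℚ] ℚ[X] :=
  LinearMap.id + slashₗ w (-1) (-1) 2 1 - slashₗ w 1 1 0 1 - slashₗ w 1 0 2 1

theorem periodRelₗ_apply (w : ℕ) (P : ℚ[X]) : periodRelₗ w P = periodRel w P := rfl

theorem slash_monomial {w e : ℕ} (he : e ≤ w) (a b c d g : ℚ) :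
    slash w a b c d (monomial e g) = C g * (C a * X + C b) ^ e * (C c * X + C d) ^ (w - e) := by
  rw [slash, Finset.sum_eq_single_of_mem e (Finset.mem_range.2 (Nat.lt_succ_of_le he))]
  · rw [coeff_monomial_same]
  · intro i _ hi
    rw [coeff_monomial_of_ne _ hi, C_0, zero_mul, zero_mul]

theorem periodRel_monomial {w e : ℕ} (he : e ≤ w) (he' : Even e) (g : ℚ) :
    periodRel w (monomial e g) =
      C g * ((X ^ e - (X + 1) ^ e) * (1 - (2 * X + 1) ^ (w - e))) := by
  have hM : (C (-1 : ℚ) * X + C (-1)) ^ e = (X + 1) ^ e := by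
    rw [← he'.neg_pow]; simp only [map_neg, map_one]; ring
  rw [periodRel, slash_monomial he, slash_monomial he, slash_monomial he, hM,
    ← C_mul_X_pow_eq_monomial]
  simp only [map_ofNat, C_0, C_1]
  ring

noncomputable def halfShift : ℚ[X] := C 2⁻¹ * (X - 1)

theorem two_mul_C_inv_two : (2 : ℚ[X]) * C 2⁻¹ = 1 := by
  rw [← map_ofNat C 2, ← C_mul]; norm_num

theorem halfShift_comp : halfShift.comp (2 * X + 1) = X := by
  simp only [halfShift, mul_comp, C_comp, sub_comp, X_comp, one_comp]
  linear_combination X * two_mul_C_inv_two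

theorem comp_halfShift_injective : Function.Injective fun P : ℚ[X] => P.comp halfShift := by
  intro P Q h
  have h' := congrArg (fun R => R.comp (2 * X + 1)) h
  simpa only [comp_assoc, halfShift_comp, comp_X] using h'

noncomputable def diffPow (e : ℕ) : ℚ[X] := (X - 1) ^ e - (X + 1) ^ e

noncomputable def shiftedPeriodRel (w : ℕ) : ℚ[X] →ₗ[ℚ] ℚ[X] where
  toFun P := (periodRel w P).comp halfShift
  map_add' P Q := by rw [← periodRelₗ_apply, map_add, add_comp]; rfl
  map_smul' c P := by rw [← periodRelₗ_apply, map_smul, smul_comp]; rfl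

theorem shiftedPeriodRel_apply (w : ℕ) (P : ℚ[X]) :
    shiftedPeriodRel w P = (periodRel w P).comp halfShift := rfl

theorem shiftedPeriodRel_monomial {w e : ℕ} (he : e ≤ w) (he' : Even e) (g : ℚ) :
    shiftedPeriodRel w (monomial e g) = C (g / 2 ^ e) * (diffPow e * (1 - X ^ (w - e))) := by
  have h1 : halfShift + 1 = C 2⁻¹ * (X + 1) := by
    rw [halfShift]; linear_combination -two_mul_C_inv_two
  have h2 : 2 * halfShift + 1 = X := by
    rw [halfShift]; linear_combination (X - 1) * two_mul_C_inv_two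
  rw [shiftedPeriodRel_apply]
  simp only [periodRel_monomial he he', mul_comp, sub_comp, add_comp, pow_comp, X_comp,
    one_comp, C_comp, ofNat_comp, Nat.cast_ofNat]
  rw [h1, h2, halfShift, mul_pow, mul_pow, diffPow, div_eq_mul_inv, ← inv_pow, C_mul, C_pow]
  ring

theorem coeff_comp_neg_X {R : Type*} [CommRing R] (p : R[X]) (j : ℕ) :
    (p.comp (-X)).coeff j = (-1) ^ j * p.coeff j := by
  induction p using Polynomial.induction_on' with
  | add p q hp hq => rw [add_comp, coeff_add, coeff_add, hp, hq, mul_add]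
  | monomial n a =>
    rw [← C_mul_X_pow_eq_monomial, mul_comp, C_comp, X_pow_comp, neg_pow, coeff_C_mul,
      coeff_C_mul, ← C_1, ← C_neg, ← C_pow, coeff_C_mul, coeff_X_pow]
    split_ifs with h
    · rw [h]; ring
    · simp

theorem reflect_X_add_C_pow {R : Type*} [CommSemiring R] (a : R) (n : ℕ) :
    reflect n ((X + C a) ^ n) = (C a * X + 1) ^ n := by
  induction n with
  | zero => simp
  | succ n ih =>
    have h1 : (X + C a).natDegree ≤ 1 := by compute_degree
    have hn : ((X + C a) ^ n).natDegree ≤ n := by compute_degree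
    rw [pow_succ, reflect_mul _ _ hn h1, ih, reflect_add, reflect_one_X, reflect_C, pow_succ]
    ring

theorem diffPow_eq (e : ℕ) : diffPow e = (X + C (-1)) ^ e - (X + C 1) ^ e := by
  simp [diffPow, sub_eq_add_neg]

theorem natDegree_diffPow_le (e : ℕ) : (diffPow e).natDegree ≤ e := by
  unfold diffPow; compute_degree

theorem reflect_diffPow {e : ℕ} (he : Even e) : reflect e (diffPow e) = diffPow e := by
  rw [diffPow_eq, reflect_sub, reflect_X_add_C_pow, reflect_X_add_C_pow,
    ← he.neg_pow (C (-1) * X + 1)]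
  simp only [C_neg, C_1]
  ring

theorem coeff_diffPow_of_odd {e i : ℕ} (he : Even e) (hi : Odd i) :
    (diffPow e).coeff i = -2 * e.choose i := by
  rw [diffPow_eq, coeff_sub, coeff_X_add_C_pow, coeff_X_add_C_pow, one_pow]
  rcases le_or_gt i e with hie | hie
  · rw [(Nat.Even.sub_odd hie he hi).neg_one_pow]
    ring
  · rw [Nat.choose_eq_zero_of_lt hie]
    ring

/-- `reflect w Q = -Q` also forces `natDegree Q ≤ w`: `reflect w` leaves the coefficients of
degree `> w` in place. -/
noncomputable def oddAntisymm (w : ℕ) : Submodule ℚ ℚ[X] where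
  carrier := {Q | Q.comp (-X) = -Q ∧ reflect w Q = -Q}
  add_mem' := by
    rintro P Q ⟨hP, hP'⟩ ⟨hQ, hQ'⟩
    exact ⟨by rw [add_comp, hP, hQ, neg_add], by rw [reflect_add, hP', hQ', neg_add]⟩
  zero_mem' := ⟨by simp, by simp⟩
  smul_mem' := by
    rintro c Q ⟨hQ, hQ'⟩
    refine ⟨by rw [smul_comp, hQ, smul_neg], ?_⟩
    simp only [smul_eq_C_mul, reflect_C_mul, hQ', mul_neg]

theorem diffPow_mul_mem_oddAntisymm {w e : ℕ} (hw : Even w) (he : Even e) (hew : e ≤ w) :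
    diffPow e * (1 - X ^ (w - e)) ∈ oddAntisymm w := by
  obtain ⟨m, rfl⟩ := Nat.exists_eq_add_of_le hew
  have hm : Even m := (Nat.even_add.1 hw).1 he
  rw [Nat.add_sub_cancel_left]
  constructor
  · have hX : (-X - 1 : ℚ[X]) = -(X + 1) := by ring
    have hX' : (-X + 1 : ℚ[X]) = -(X - 1) := by ring
    simp only [diffPow, mul_comp, sub_comp, add_comp, pow_comp, X_comp, one_comp, hX, hX',
      he.neg_pow, hm.neg_pow]
    ring
  · have h1 : reflect (e + m) (diffPow e) = diffPow e * X ^ m := by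
      have := reflect_mul (diffPow e) 1 (natDegree_diffPow_le e)
        (by simp : (1 : ℚ[X]).natDegree ≤ m)
      rwa [mul_one, reflect_diffPow he, reflect_one] at this
    have h2 : reflect (e + m) (diffPow e * X ^ m) = diffPow e := by
      rw [reflect_mul _ _ (natDegree_diffPow_le e) (natDegree_X_pow_le m), reflect_diffPow he,
        reflect_monomial, revAt_le le_rfl, Nat.sub_self, pow_zero, mul_one]
    rw [mul_sub, mul_one, reflect_sub, h1, h2, neg_sub]

theorem eq_zero_of_mem_oddAntisymm {n r : ℕ} (hr : n ≤ 2 * r) {Q : ℚ[X]}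
    (hQ : Q ∈ oddAntisymm (2 * n + 2)) (hlow : ∀ s < r, Q.coeff (2 * s + 1) = 0) : Q = 0 := by
  obtain ⟨hodd, hrefl⟩ := hQ
  have heven : ∀ j, Even j → Q.coeff j = 0 := fun j hj => by
    have h := congrArg (coeff · j) hodd
    simp only [coeff_comp_neg_X, hj.neg_one_pow, one_mul, coeff_neg] at h
    linarith
  have hsymm : ∀ j, Q.coeff (revAt (2 * n + 2) j) = -Q.coeff j := fun j => by
    simpa only [coeff_reflect, coeff_neg] using congrArg (coeff · j) hrefl
  ext j
  rw [coeff_zero]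
  obtain hj | ⟨c, rfl⟩ := Nat.even_or_odd j
  · exact heven j hj
  by_cases hc : c < r
  · exact hlow c hc
  have h := hsymm (2 * c + 1)
  rcases le_or_gt (2 * c + 1) (2 * n + 2) with hle | hgt
  · rw [revAt_le hle] at h
    by_cases hc' : n - c < r
    · rw [show 2 * n + 2 - (2 * c + 1) = 2 * (n - c) + 1 by omega, hlow _ hc'] at h
      linarith
    · rw [show 2 * n + 2 - (2 * c + 1) = 2 * c + 1 by omega] at h
      linarith
  · rw [revAt_eq_self_of_lt hgt] at h
    linarith

noncomputable def evenPoly (n : ℕ) : (Fin n → ℚ) →ₗ[ℚ] ℚ[X] :=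
  ∑ t : Fin n, monomial (2 * t + 2) ∘ₗ LinearMap.proj t

theorem evenPoly_apply (n : ℕ) (b : Fin n → ℚ) :
    evenPoly n b = ∑ t : Fin n, monomial (2 * t + 2) (b t) := by
  simp [evenPoly]

theorem coeff_evenPoly (n : ℕ) (b : Fin n → ℚ) (t : Fin n) :
    (evenPoly n b).coeff (2 * t + 2) = b t := by
  rw [evenPoly_apply, finsetSum_coeff, Finset.sum_eq_single t]
  · exact coeff_monomial_same _ _
  · intro u _ hu
    exact coeff_monomial_of_ne _ fun h => hu (Fin.ext (by omega))
  · simp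

theorem evenPoly_single (n : ℕ) (t : Fin n) :
    evenPoly n (Pi.single t 1) = monomial (2 * t + 2) 1 := by
  rw [evenPoly_apply, Finset.sum_eq_single t]
  · rw [Pi.single_eq_same]
  · intro u _ hu
    rw [Pi.single_eq_of_ne hu, map_zero]
  · simp

theorem evenPoly_injective (n : ℕ) : Function.Injective (evenPoly n) := fun b b' h =>
  funext fun t => by rw [← coeff_evenPoly n b, h, coeff_evenPoly]

theorem mem_range_evenPoly_iff {n : ℕ} {P : ℚ[X]} :
    P ∈ LinearMap.range (evenPoly n) ↔ ∀ i, P.coeff i ≠ 0 → 2 ≤ i ∧ i ≤ 2 * n ∧ Even i := by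
  constructor
  · rintro ⟨b, rfl⟩ i hi
    rw [evenPoly_apply, finsetSum_coeff] at hi
    obtain ⟨t, -, ht⟩ := Finset.exists_ne_zero_of_sum_ne_zero hi
    have hti : 2 * (t : ℕ) + 2 = i := by
      by_contra h
      exact ht (coeff_monomial_of_ne _ (Ne.symm h))
    exact ⟨by omega, by omega, ⟨t + 1, by omega⟩⟩
  · intro hP
    refine ⟨fun t => P.coeff (2 * t + 2), ?_⟩
    ext i
    rw [evenPoly_apply, finsetSum_coeff]
    by_cases hi : P.coeff i = 0
    · rw [hi]
      refine Finset.sum_eq_zero fun t _ => ?_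
      rw [coeff_monomial]
      split_ifs with h
      · rw [h, hi]
      · rfl
    · obtain ⟨h2, hle, c, rfl⟩ := hP i hi
      obtain ⟨t, htc⟩ : ∃ t : Fin n, 2 * (t : ℕ) + 2 = c + c :=
        ⟨⟨c - 1, by omega⟩, show 2 * (c - 1) + 2 = c + c by omega⟩
      rw [← htc, Finset.sum_eq_single t, coeff_monomial_same]
      · intro u _ hu
        exact coeff_monomial_of_ne _ fun h => hu (Fin.ext (by omega))
      · simp

theorem shiftedPeriodRel_evenPoly_mem (n : ℕ) (b : Fin n → ℚ) :
    shiftedPeriodRel (2 * n + 2) (evenPoly n b) ∈ oddAntisymm (2 * n + 2) := by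
  rw [evenPoly_apply, map_sum]
  refine Submodule.sum_mem _ fun t _ => ?_
  have ht : Even (2 * (t : ℕ) + 2) := ⟨t + 1, by ring⟩
  rw [shiftedPeriodRel_monomial (by omega) ht, ← smul_eq_C_mul]
  exact Submodule.smul_mem _ _ (diffPow_mul_mem_oddAntisymm ⟨n + 1, by ring⟩ ht (by omega))

noncomputable def periodMap (n r : ℕ) : (Fin n → ℚ) →ₗ[ℚ] (Fin r → ℚ) :=
  LinearMap.pi (fun s : Fin r => lcoeff ℚ (2 * s + 1)) ∘ₗ
    shiftedPeriodRel (2 * n + 2) ∘ₗ evenPoly n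

theorem periodMap_apply (n r : ℕ) (b : Fin n → ℚ) (s : Fin r) :
    periodMap n r b s = (shiftedPeriodRel (2 * n + 2) (evenPoly n b)).coeff (2 * s + 1) := rfl

theorem ker_periodMap {n r : ℕ} (hr : n ≤ 2 * r) :
    LinearMap.ker (periodMap n r) = LinearMap.ker (periodRelₗ (2 * n + 2) ∘ₗ evenPoly n) := by
  ext b
  simp only [LinearMap.mem_ker, LinearMap.comp_apply, periodRelₗ_apply]
  constructor
  · intro h
    apply comp_halfShift_injective
    exact (eq_zero_of_mem_oddAntisymm hr (shiftedPeriodRel_evenPoly_mem n b)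
      fun s hs => congrFun h ⟨s, hs⟩).trans (zero_comp).symm
  · intro h
    ext s
    rw [periodMap_apply, shiftedPeriodRel_apply, h, zero_comp, coeff_zero, Pi.zero_apply]

theorem periodMap_single {n r : ℕ} (s : Fin r) (t : Fin n) (hst : (s : ℕ) + t < n) :
    periodMap n r (Pi.single t 1) s =
      -2 * ((2 * (t : ℕ) + 2).choose (2 * s + 1) : ℚ) / 2 ^ (2 * (t : ℕ) + 2) := by
  rw [periodMap_apply, evenPoly_single, shiftedPeriodRel_monomial (by omega) ⟨t + 1, by ring⟩,
    coeff_C_mul, mul_sub, mul_one, coeff_sub, coeff_mul_X_pow', if_neg (by omega), sub_zero,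
    coeff_diffPow_of_odd ⟨t + 1, by ring⟩ ⟨s, rfl⟩]
  ring

theorem periodMap_surjective {n r : ℕ} (hr : 2 * r ≤ n + 1) :
    Function.Surjective (periodMap n r) := by
  have hrn : r ≤ n := by omega
  set N := (LinearMap.toMatrix' (periodMap n r)).submatrix id (Fin.castLE hrn) with hNdef
  have hN : ∀ s t : Fin r,
      N s t = -2 * ((2 * (t : ℕ) + 2).choose (2 * s + 1) : ℚ) / 2 ^ (2 * (t : ℕ) + 2) :=
    fun s t => by
      rw [hNdef, Matrix.submatrix_apply, LinearMap.toMatrix'_apply, id,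
        periodMap_single _ _ (show (s : ℕ) + t < n by omega), Fin.val_castLE]
  have hupper : N.IsUpperTriangular := fun s t (hts : t < s) => by
    rw [hN, Nat.choose_eq_zero_of_lt (by omega)]
    simp
  have hdet : N.det ≠ 0 := by
    rw [Matrix.det_of_isUpperTriangular hupper]
    refine Finset.prod_ne_zero_iff.2 fun t _ => ?_
    rw [hN]
    have := Nat.choose_pos (show 2 * (t : ℕ) + 1 ≤ 2 * t + 2 by omega)
    positivity
  have hNsurj : Function.Surjective N.mulVec := Matrix.mulVec_surjective_iff_isUnit.2
    ((Matrix.isUnit_iff_isUnit_det N).2 (isUnit_iff_ne_zero.2 hdet))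
  intro y
  obtain ⟨x, rfl⟩ := hNsurj y
  refine ⟨((1 : Matrix (Fin n) (Fin n) ℚ).submatrix (Equiv.refl _) (Fin.castLE hrn)).mulVec x, ?_⟩
  rw [← LinearMap.toMatrix'_mulVec, Matrix.mulVec_mulVec, Matrix.mul_submatrix_one]
  rfl

theorem finrank_ker_periodRel_evenPoly {n r : ℕ} (hr : n ≤ 2 * r) (hr' : 2 * r ≤ n + 1) :
    Module.finrank ℚ (LinearMap.ker (periodRelₗ (2 * n + 2) ∘ₗ evenPoly n)) = n - r := by
  have h := LinearMap.finrank_range_add_finrank_ker (periodMap n r)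
  rw [LinearMap.range_eq_top.2 (periodMap_surjective hr'), finrank_top, Module.finrank_fin_fun,
    Module.finrank_fin_fun, ker_periodMap hr] at h
  omega

end PeriodPoly

open PeriodPoly

/-- dim W_k^{+,0} = ⌊k/4⌋ − 1, where W_k^{+,0} consists of even polynomials
Σ_{i=2, i even}^{k−4} a_i X^i satisfying P|(1−T)(1+M) = 0. -/
theorem dim_even_period_polys (k : ℕ) (hk : 4 ≤ k) (hke : Even k)
    (W : Submodule ℚ (Polynomial ℚ))
    (hW : ∀ P : Polynomial ℚ, P ∈ W ↔
      ((∀ i : ℕ, P.coeff i ≠ 0 → 2 ≤ i ∧ i ≤ k - 4 ∧ Even i) ∧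
        periodRel (k - 2) P = 0)) :
    Module.finrank ℚ W = k / 4 - 1 := by
  obtain ⟨n, rfl⟩ : ∃ n, k = 2 * n + 4 := by
    obtain ⟨m, rfl⟩ := hke
    exact ⟨m - 2, by omega⟩
  have hW' : W = (LinearMap.ker (periodRelₗ (2 * n + 2) ∘ₗ evenPoly n)).map (evenPoly n) := by
    ext P
    rw [hW, Submodule.mem_map, show 2 * n + 4 - 4 = 2 * n by omega,
      show 2 * n + 4 - 2 = 2 * n + 2 by omega, ← mem_range_evenPoly_iff]
    constructor
    · rintro ⟨⟨b, rfl⟩, h⟩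
      exact ⟨b, h, rfl⟩
    · rintro ⟨b, hb, rfl⟩
      exact ⟨⟨b, rfl⟩, hb⟩
  rw [hW', ← (Submodule.equivMapOfInjective _ (evenPoly_injective n) _).finrank_eq,
    finrank_ker_periodRel_evenPoly (r := (n + 1) / 2) (by omega) (by omega)]
  omega
end
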